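/- Fix channels h_1, …, h_K ∈ ℂ^N, noise powers σ_k² > 0, SINR thresholds τ_k > 0, steering vectors a_1, …, a_M ∈ ℂ^N with thresholds Γ_m, P_max > 0, ρ ∈ (0,1], P_c > 0, λ > 0, and linearization constants a_k ∈ ℝ (k = 1, …, K). Suppose PSD matrices Ṽ_0, Ṽ_1, …, Ṽ_K and reals t ≥ 0, u ≥ 0 satisfy: (i) u ≥ (1/ρ)Σ_k Tr(Ṽ_k) + (1/ρ)Tr(Ṽ_0) + P_c; (ii) the surrogate rate constraint (λ/2)t² + (1/(2λ))u² ≤ Σ_{k=1}^{K} [ log₂(Σ_{i=0}^{K} h_kᴴ Ṽ_i h_k + σ_k²) − a_k − (log₂ e / 2^{a_k}) · (Σ_{i=0, i≠k}^{K} h_kᴴ Ṽ_i h_k − c_k) ] for fixed constants c_k ∈ ℝ; (iii) h_kᴴ Ṽ_k h_k ≥ τ_k (Σ_{i=0, i≠k}^{K} h_kᴴ Ṽ_i h_k + σ_k²) for all k; (iv) Σ_k Tr(Ṽ_k) + Tr(Ṽ_0) ≤ P_max; (v) a_mᴴ (Σ_k Ṽ_k + Ṽ_0) a_m ≥ Γ_m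 for all m. Define v̂_k = (h_kᴴ Ṽ_k h_k)^{-1/2} · (Ṽ_k h_k), V̂_k = v̂_k v̂_kᴴ for k = 1, …, K, and V̂_0 = Σ_{k=1}^{K} Ṽ_k + Ṽ_0 − Σ_{k=1}^{K} V̂_k. Then: (a) every V̂_k (k = 0, 1, …, K) is PSD; (b) the point (V̂_0, …, V̂_K, t, u) satisfies all of the constraints (i)–(v) (with Ṽ replaced by V̂); and (c) rank(V̂_k) = 1 for every k = 1, …, K. -/

import Mathlib

/-!
Write `Q = hᴴ V h` for a PSD `V` and `v̂ = Q^{-1/2} • V h`. Then `hᴴ (v̂ v̂ᴴ) h = |hᴴ V h|² / Q = Q`,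
and for every `x`, `xᴴ (v̂ v̂ᴴ) x = |xᴴ V h|² / Q ≤ xᴴ V x` by Cauchy–Schwarz for the semi-inner
product `xᴴ V y`, so `V - v̂ v̂ᴴ` is PSD. Hence `V̂_0 = Ṽ_0 + ∑_k (Ṽ_k - V̂_k)` is PSD. The total
covariance is unchanged, hence so are the traces, the sensing forms and every received power
`∑_i h_kᴴ V_i h_k`; as the useful powers `h_kᴴ V_k h_k` are unchanged too, so are the interference
terms, and each constraint reads exactly as before. The SINR constraint forces `Q > 0`, so `v̂ ≠ 0`
and `V̂_k` has rank one.
-/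

open Matrix Finset
open scoped ComplexOrder

/-- The real quadratic form of a complex matrix `V` at vector `x`: `xᴴ V x` (real part). -/
noncomputable def quadForm {N : ℕ} (V : Matrix (Fin N) (Fin N) ℂ) (x : Fin N → ℂ) : ℝ :=
  (star x ⬝ᵥ V *ᵥ x).re

theorem Matrix.rank_vecMulVec_eq_one {m n K : Type*} [Fintype n] [Field K] {w : m → K} {v : n → K}
    (hw : w ≠ 0) (hv : v ≠ 0) : (vecMulVec w v).rank = 1 := by
  classical
  refine le_antisymm (rank_vecMulVec_le w v) (Nat.one_le_iff_ne_zero.mpr fun h0 => ?_)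
  obtain ⟨i, hi⟩ := Function.ne_iff.mp hw
  obtain ⟨j, hj⟩ := Function.ne_iff.mp hv
  rw [rank, Submodule.finrank_eq_zero, LinearMap.range_eq_bot] at h0
  have hcol := congrArg (fun f => f (Pi.single j 1) i) h0
  simp only [mulVecLin_apply, mulVec_single_one, LinearMap.zero_apply, Pi.zero_apply,
    col_apply, vecMulVec_apply] at hcol
  exact mul_ne_zero hi hj hcol

section QuadForm

variable {N : ℕ}

theorem quadForm_sub (A B : Matrix (Fin N) (Fin N) ℂ) (x : Fin N → ℂ) :
    quadForm (A - B) x = quadForm A x - quadForm B x := by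
  simp only [quadForm, sub_mulVec, dotProduct_sub, Complex.sub_re]

theorem quadForm_sum {ι : Type*} (s : Finset ι) (A : ι → Matrix (Fin N) (Fin N) ℂ)
    (x : Fin N → ℂ) : quadForm (∑ i ∈ s, A i) x = ∑ i ∈ s, quadForm (A i) x := by
  simp only [quadForm, sum_mulVec, dotProduct_sum, Complex.re_sum]

theorem quadForm_vecMulVec_self_star (v x : Fin N → ℂ) :
    quadForm (vecMulVec v (star v)) x = Complex.normSq (star x ⬝ᵥ v) := by
  rw [quadForm, vecMulVec_mulVec, dotProduct_smul, op_smul_eq_smul, star_dotProduct (v := v),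
    smul_eq_mul, Complex.star_def, mul_comm, Complex.mul_conj, Complex.ofReal_re]

theorem Matrix.IsHermitian.ofReal_quadForm {A : Matrix (Fin N) (Fin N) ℂ} (hA : A.IsHermitian)
    (x : Fin N → ℂ) : (quadForm A x : ℂ) = star x ⬝ᵥ A *ᵥ x :=
  Complex.ext rfl (hA.im_star_dotProduct_mulVec_self x).symm

theorem Matrix.IsHermitian.posSemidef_of_quadForm_nonneg {A : Matrix (Fin N) (Fin N) ℂ}
    (hA : A.IsHermitian) (h : ∀ x, 0 ≤ quadForm A x) : A.PosSemidef :=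
  .of_dotProduct_mulVec_nonneg hA fun x => hA.ofReal_quadForm x ▸ Complex.zero_le_real.mpr (h x)

theorem Matrix.PosSemidef.quadForm_nonneg {A : Matrix (Fin N) (Fin N) ℂ} (hA : A.PosSemidef)
    (x : Fin N → ℂ) : 0 ≤ quadForm A x :=
  hA.re_dotProduct_nonneg x

theorem Matrix.PosSemidef.normSq_dotProduct_mulVec_le {V : Matrix (Fin N) (Fin N) ℂ}
    (hV : V.PosSemidef) (x y : Fin N → ℂ) :
    Complex.normSq (star x ⬝ᵥ V *ᵥ y) ≤ quadForm V x * quadForm V y := by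
  let := V.toSeminormedAddCommGroup hV
  let := V.toInnerProductSpace hV
  have hcs := inner_mul_inner_self_le (𝕜 := ℂ) x y
  rw [← norm_inner_symm x y] at hcs
  -- the inner product of `toInnerProductSpace` is `⟪x, y⟫ = (V *ᵥ y) ⬝ᵥ star x`
  change ‖(V *ᵥ y) ⬝ᵥ star x‖ * ‖(V *ᵥ y) ⬝ᵥ star x‖ ≤
    ((V *ᵥ x) ⬝ᵥ star x).re * ((V *ᵥ y) ⬝ᵥ star y).re at hcs
  simpa only [quadForm, dotProduct_comm (star _), Complex.normSq_eq_norm_sq, sq] using hcs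

end QuadForm

section RankOneFactor

variable {N : ℕ}

/-- The paper's `v̂`. When `xᴴ V x = 0`, the convention `0 ^ (-1/2) = 0` makes it `0`. -/
noncomputable def rankOneFactor (V : Matrix (Fin N) (Fin N) ℂ) (x : Fin N → ℂ) : Fin N → ℂ :=
  (quadForm V x ^ (-(1/2) : ℝ)) • (V *ᵥ x)

theorem quadForm_vecMulVec_rankOneFactor {V : Matrix (Fin N) (Fin N) ℂ} (hV : V.PosSemidef)
    (x y : Fin N → ℂ) :
    quadForm (vecMulVec (rankOneFactor V x) (star (rankOneFactor V x))) y =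
      Complex.normSq (star y ⬝ᵥ V *ᵥ x) / quadForm V x := by
  have hsq : (quadForm V x ^ (-(1/2) : ℝ)) ^ 2 = (quadForm V x)⁻¹ := by
    rw [← Real.rpow_mul_natCast (hV.quadForm_nonneg x)]
    norm_num [Real.rpow_neg_one]
  rw [quadForm_vecMulVec_self_star, rankOneFactor, dotProduct_smul, Complex.real_smul,
    Complex.normSq_mul, Complex.normSq_ofReal, ← sq, hsq, inv_mul_eq_div]

theorem quadForm_vecMulVec_rankOneFactor_self {V : Matrix (Fin N) (Fin N) ℂ} (hV : V.PosSemidef)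
    (x : Fin N → ℂ) :
    quadForm (vecMulVec (rankOneFactor V x) (star (rankOneFactor V x))) x = quadForm V x := by
  rw [quadForm_vecMulVec_rankOneFactor hV, ← hV.isHermitian.ofReal_quadForm,
    Complex.normSq_ofReal, mul_self_div_self]

theorem Matrix.PosSemidef.sub_vecMulVec_rankOneFactor {V : Matrix (Fin N) (Fin N) ℂ}
    (hV : V.PosSemidef) (x : Fin N → ℂ) :
    (V - vecMulVec (rankOneFactor V x) (star (rankOneFactor V x))).PosSemidef := by
  refine (hV.isHermitian.sub (posSemidef_vecMulVec_self_star _).isHermitian)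
    |>.posSemidef_of_quadForm_nonneg fun y => ?_
  rw [quadForm_sub, sub_nonneg, quadForm_vecMulVec_rankOneFactor hV]
  exact div_le_of_le_mul₀ (hV.quadForm_nonneg x) (hV.quadForm_nonneg y)
    (hV.normSq_dotProduct_mulVec_le y x)

theorem rank_vecMulVec_rankOneFactor {V : Matrix (Fin N) (Fin N) ℂ} (hV : V.PosSemidef)
    {x : Fin N → ℂ} (hx : 0 < quadForm V x) :
    (vecMulVec (rankOneFactor V x) (star (rankOneFactor V x))).rank = 1 := by
  have hne : rankOneFactor V x ≠ 0 := fun h0 => hx.ne' <| by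
    rw [← quadForm_vecMulVec_rankOneFactor_self hV x, h0, quadForm_vecMulVec_self_star,
      dotProduct_zero, map_zero]
  exact rank_vecMulVec_eq_one hne (star_ne_zero.mpr hne)

end RankOneFactor

section Redistribution

variable {K : ℕ}

theorem sum_succ_add_zero {α : Type*} [AddCommMonoid α] (f : Fin (K + 1) → α) :
    ∑ k : Fin K, f k.succ + f 0 = ∑ i, f i := by
  rw [Fin.sum_univ_succ, add_comm]

theorem sum_cons_sub_sum {α : Type*} [AddCommGroup α] (V : Fin (K + 1) → α) (W : Fin K → α) :
    ∑ i, (Fin.cons (∑ k : Fin K, V k.succ + V 0 - ∑ k, W k) W : Fin (K + 1) → α) i = ∑ i, V i := by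
  simp only [Fin.sum_univ_succ (n := K), Fin.cons_zero, Fin.cons_succ]
  abel

theorem Matrix.posSemidef_sum_add_sub_sum {n R : Type*} [Ring R] [PartialOrder R] [StarRing R]
    [AddLeftMono R] {V : Fin (K + 1) → Matrix n n R} {W : Fin K → Matrix n n R}
    (h0 : (V 0).PosSemidef) (hW : ∀ k, (V k.succ - W k).PosSemidef) :
    (∑ k : Fin K, V k.succ + V 0 - ∑ k, W k).PosSemidef := by
  have hsplit : ∑ k : Fin K, V k.succ + V 0 - ∑ k, W k = V 0 + ∑ k, (V k.succ - W k) := by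
    rw [sum_sub_distrib]
    abel
  rw [hsplit]
  exact h0.add (posSemidef_sum _ fun k _ => hW k)

end Redistribution

theorem Finset.sum_erase_eq_of_sum_eq {ι α : Type*} [DecidableEq ι] [AddCommGroup α]
    {s : Finset ι} {f g : ι → α} {j : ι} (hj : j ∈ s) (hs : ∑ i ∈ s, f i = ∑ i ∈ s, g i)
    (hfg : f j = g j) : ∑ i ∈ s.erase j, f i = ∑ i ∈ s.erase j, g i := by
  rw [sum_erase_eq_sub hj, sum_erase_eq_sub hj, hs, hfg]

theorem sdr_tightness_general {N K M : ℕ}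
    (h : Fin K → Fin N → ℂ) (σ2 τ : Fin K → ℝ)
    (hσ : ∀ k, 0 < σ2 k) (hτ : ∀ k, 0 < τ k)
    (a : Fin M → Fin N → ℂ) (Γ : Fin M → ℝ)
    (Pmax ρ Pc : ℝ)
    (lam : ℝ)
    (ak ck : Fin K → ℝ)
    (Vt : Fin (K + 1) → Matrix (Fin N) (Fin N) ℂ)
    (hVtpsd : ∀ i, (Vt i).PosSemidef)
    (t u : ℝ)
    -- (i) power-consumption epigraph constraint
    (hi : u ≥ (1 / ρ) * (∑ k : Fin K, (Matrix.trace (Vt k.succ)).re) +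
      (1 / ρ) * (Matrix.trace (Vt 0)).re + Pc)
    -- (ii) surrogate rate constraint
    (hii : (lam / 2) * t ^ 2 + (1 / (2 * lam)) * u ^ 2 ≤
      ∑ k : Fin K, (Real.logb 2 ((∑ i, quadForm (Vt i) (h k)) + σ2 k) - ak k -
        (Real.logb 2 (Real.exp 1) / (2 : ℝ) ^ (ak k)) *
          ((∑ i ∈ Finset.univ.erase k.succ, quadForm (Vt i) (h k)) - ck k)))
    -- (iii) SINR constraints
    (hiii : ∀ k : Fin K, quadForm (Vt k.succ) (h k) ≥
      τ k * ((∑ i ∈ Finset.univ.erase k.succ, quadForm (Vt i) (h k)) + σ2 k))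
    -- (iv) power budget constraint
    (hiv : (∑ k : Fin K, (Matrix.trace (Vt k.succ)).re) + (Matrix.trace (Vt 0)).re ≤ Pmax)
    -- (v) sensing constraints
    (hv : ∀ m, quadForm ((∑ k : Fin K, Vt k.succ) + Vt 0) (a m) ≥ Γ m)
    -- the rank-one construction
    (vhat : Fin K → Fin N → ℂ)
    (hvhat : ∀ k, vhat k = ((quadForm (Vt k.succ) (h k)) ^ (-(1/2) : ℝ)) • (Vt k.succ *ᵥ h k))
    (Vh : Fin (K + 1) → Matrix (Fin N) (Fin N) ℂ)
    (hVh : Vh = Fin.cons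
      ((∑ k : Fin K, Vt k.succ) + Vt 0 - ∑ k : Fin K, vecMulVec (vhat k) (star (vhat k)))
      (fun k => vecMulVec (vhat k) (star (vhat k)))) :
    -- (a) all constructed matrices are PSD
    (∀ i, (Vh i).PosSemidef) ∧
    -- (b) the constraints (i)–(v) hold with Ṽ replaced by V̂
    (u ≥ (1 / ρ) * (∑ k : Fin K, (Matrix.trace (Vh k.succ)).re) +
      (1 / ρ) * (Matrix.trace (Vh 0)).re + Pc) ∧
    ((lam / 2) * t ^ 2 + (1 / (2 * lam)) * u ^ 2 ≤
      ∑ k : Fin K, (Real.logb 2 ((∑ i, quadForm (Vh i) (h k)) + σ2 k) - ak k -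
        (Real.logb 2 (Real.exp 1) / (2 : ℝ) ^ (ak k)) *
          ((∑ i ∈ Finset.univ.erase k.succ, quadForm (Vh i) (h k)) - ck k))) ∧
    (∀ k : Fin K, quadForm (Vh k.succ) (h k) ≥
      τ k * ((∑ i ∈ Finset.univ.erase k.succ, quadForm (Vh i) (h k)) + σ2 k)) ∧
    ((∑ k : Fin K, (Matrix.trace (Vh k.succ)).re) + (Matrix.trace (Vh 0)).re ≤ Pmax) ∧
    (∀ m, quadForm ((∑ k : Fin K, Vh k.succ) + Vh 0) (a m) ≥ Γ m) ∧
    -- (c) the communication covariances are rank one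
    (∀ k : Fin K, (Vh k.succ).rank = 1) := by
  have hVh_succ (k : Fin K) : Vh k.succ = vecMulVec (vhat k) (star (vhat k)) := by
    rw [hVh, Fin.cons_succ]
  have hpos (k : Fin K) : 0 < quadForm (Vt k.succ) (h k) :=
    (mul_pos (hτ k) (add_pos_of_nonneg_of_pos
      (sum_nonneg fun i _ => (hVtpsd i).quadForm_nonneg _) (hσ k))).trans_le (hiii k)
  have hdiag (k : Fin K) : quadForm (Vh k.succ) (h k) = quadForm (Vt k.succ) (h k) := by
    rw [hVh_succ, hvhat]
    exact quadForm_vecMulVec_rankOneFactor_self (hVtpsd _) _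
  have htotal : ∑ i, Vh i = ∑ i, Vt i := hVh ▸ sum_cons_sub_sum Vt _
  have hreceived (x : Fin N → ℂ) : ∑ i, quadForm (Vh i) x = ∑ i, quadForm (Vt i) x := by
    rw [← quadForm_sum, ← quadForm_sum, htotal]
  have hinterference (k : Fin K) :
      ∑ i ∈ univ.erase k.succ, quadForm (Vh i) (h k) =
        ∑ i ∈ univ.erase k.succ, quadForm (Vt i) (h k) :=
    sum_erase_eq_of_sum_eq (mem_univ _) (hreceived (h k)) (hdiag k)
  have hpower : (∑ k : Fin K, (Vh k.succ).trace.re) + (Vh 0).trace.re =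
      (∑ k : Fin K, (Vt k.succ).trace.re) + (Vt 0).trace.re := by
    rw [sum_succ_add_zero (fun i => (Vh i).trace.re), sum_succ_add_zero (fun i => (Vt i).trace.re),
      ← Complex.re_sum, ← Complex.re_sum, ← trace_sum, ← trace_sum, htotal]
  refine ⟨fun i => ?_, ?_, ?_, fun k => ?_, ?_, fun m => ?_, fun k => ?_⟩
  · cases i using Fin.cases with
    | zero =>
      rw [hVh, Fin.cons_zero]
      refine posSemidef_sum_add_sub_sum (hVtpsd 0) fun k => ?_
      rw [hvhat]
      exact (hVtpsd _).sub_vecMulVec_rankOneFactor _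
    | succ k =>
      rw [hVh_succ]
      exact posSemidef_vecMulVec_self_star _
  · rwa [← mul_add, hpower, mul_add]
  · simpa only [hreceived, hinterference] using hii
  · rw [hdiag, hinterference]
    exact hiii k
  · rwa [hpower]
  · rw [sum_succ_add_zero Vh, htotal, ← sum_succ_add_zero Vt]
    exact hv m
  · rw [hVh_succ, hvhat]
    exact rank_vecMulVec_rankOneFactor (hVtpsd _) (hpos k)

/-- Theorem 1 of the paper, tightness of the SDR: from any
feasible point `(Ṽ_0, …, Ṽ_K, t, u)` of the surrogate problem (13), the
construction `v̂_k = (h_kᴴ Ṽ_k h_k)^{-1/2} (Ṽ_k h_k)`, `V̂_k = v̂_k v̂_kᴴ`,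
`V̂_0 = ∑_k Ṽ_k + Ṽ_0 − ∑_k V̂_k` yields PSD matrices satisfying all the
constraints of (13) with `rank(V̂_k) = 1` for `k = 1, …, K`. -/
theorem sdr_tightness {N K M : ℕ}
    (h : Fin K → Fin N → ℂ) (σ2 τ : Fin K → ℝ)
    (hσ : ∀ k, 0 < σ2 k) (hτ : ∀ k, 0 < τ k)
    (a : Fin M → Fin N → ℂ) (Γ : Fin M → ℝ)
    (Pmax ρ Pc : ℝ) (hPmax : 0 < Pmax) (hρ0 : 0 < ρ) (hρ1 : ρ ≤ 1) (hPc : 0 < Pc)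
    (lam : ℝ) (hlam : 0 < lam)
    (ak ck : Fin K → ℝ)
    (Vt : Fin (K + 1) → Matrix (Fin N) (Fin N) ℂ)
    (hVtpsd : ∀ i, (Vt i).PosSemidef)
    (t u : ℝ) (ht0 : 0 ≤ t) (hu0 : 0 ≤ u)
    -- (i) power-consumption epigraph constraint
    (hi : u ≥ (1 / ρ) * (∑ k : Fin K, (Matrix.trace (Vt k.succ)).re) +
      (1 / ρ) * (Matrix.trace (Vt 0)).re + Pc)
    -- (ii) surrogate rate constraint
    (hii : (lam / 2) * t ^ 2 + (1 / (2 * lam)) * u ^ 2 ≤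
      ∑ k : Fin K, (Real.logb 2 ((∑ i, quadForm (Vt i) (h k)) + σ2 k) - ak k -
        (Real.logb 2 (Real.exp 1) / (2 : ℝ) ^ (ak k)) *
          ((∑ i ∈ Finset.univ.erase k.succ, quadForm (Vt i) (h k)) - ck k)))
    -- (iii) SINR constraints
    (hiii : ∀ k : Fin K, quadForm (Vt k.succ) (h k) ≥
      τ k * ((∑ i ∈ Finset.univ.erase k.succ, quadForm (Vt i) (h k)) + σ2 k))
    -- (iv) power budget constraint
    (hiv : (∑ k : Fin K, (Matrix.trace (Vt k.succ)).re) + (Matrix.trace (Vt 0)).re ≤ Pmax)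
    -- (v) sensing constraints
    (hv : ∀ m, quadForm ((∑ k : Fin K, Vt k.succ) + Vt 0) (a m) ≥ Γ m)
    -- the rank-one construction
    (vhat : Fin K → Fin N → ℂ)
    (hvhat : ∀ k, vhat k = ((quadForm (Vt k.succ) (h k)) ^ (-(1/2) : ℝ)) • (Vt k.succ *ᵥ h k))
    (Vh : Fin (K + 1) → Matrix (Fin N) (Fin N) ℂ)
    (hVh : Vh = Fin.cons
      ((∑ k : Fin K, Vt k.succ) + Vt 0 - ∑ k : Fin K, vecMulVec (vhat k) (star (vhat k)))
      (fun k => vecMulVec (vhat k) (star (vhat k)))) :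
    -- (a) all constructed matrices are PSD
    (∀ i, (Vh i).PosSemidef) ∧
    -- (b) the constraints (i)–(v) hold with Ṽ replaced by V̂
    (u ≥ (1 / ρ) * (∑ k : Fin K, (Matrix.trace (Vh k.succ)).re) +
      (1 / ρ) * (Matrix.trace (Vh 0)).re + Pc) ∧
    ((lam / 2) * t ^ 2 + (1 / (2 * lam)) * u ^ 2 ≤
      ∑ k : Fin K, (Real.logb 2 ((∑ i, quadForm (Vh i) (h k)) + σ2 k) - ak k -
        (Real.logb 2 (Real.exp 1) / (2 : ℝ) ^ (ak k)) *
          ((∑ i ∈ Finset.univ.erase k.succ, quadForm (Vh i) (h k)) - ck k))) ∧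
    (∀ k : Fin K, quadForm (Vh k.succ) (h k) ≥
      τ k * ((∑ i ∈ Finset.univ.erase k.succ, quadForm (Vh i) (h k)) + σ2 k)) ∧
    ((∑ k : Fin K, (Matrix.trace (Vh k.succ)).re) + (Matrix.trace (Vh 0)).re ≤ Pmax) ∧
    (∀ m, quadForm ((∑ k : Fin K, Vh k.succ) + Vh 0) (a m) ≥ Γ m) ∧
    -- (c) the communication covariances are rank one
    (∀ k : Fin K, (Vh k.succ).rank = 1) :=
  sdr_tightness_general h σ2 τ hσ hτ a Γ Pmax ρ Pc lam ak ck Vt hVtpsd t u hi hii hiii hiv hv vhat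
    hvhat Vh hVh
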